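/- arXiv:0910.2733 — 6 statements merged into one kernel-verified Lean document; each statement's English description precedes it below -/
import Mathlib

section
/- For a comonad L on the arrow category arising from an algebraic weak factorization system, the class of coalgebras for the underlying pointed endofunctor (L, ε) is the retract closure of the class of coalgebras for the comonad L: every arrow admitting an (L,ε)-coalgebra structure is a retract (in the arrow category) of an arrow admitting an L-coalgebra structure, namely its own left factor Lf with its cofree coalgebra structure; and conversely retracts of L-coalgebras admit (L,ε)-coalgebra structures. -/
open CategoryTheory

universe v u

/-- A functorial factorization on `M`: every arrow `f` factors as `r f ∘ l f`,
functorially in commutative squares. -/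
structure FunctFact (M : Type u) [Category.{v} M] where
  E : ∀ {X Y : M}, (X ⟶ Y) → M
  l : ∀ {X Y : M} (f : X ⟶ Y), X ⟶ E f
  r : ∀ {X Y : M} (f : X ⟶ Y), E f ⟶ Y
  fact : ∀ {X Y : M} (f : X ⟶ Y), l f ≫ r f = f
  map : ∀ {X Y X' Y' : M} {f : X ⟶ Y} {g : X' ⟶ Y'} (u : X ⟶ X') (v : Y ⟶ Y'),
    f ≫ v = u ≫ g → (E f ⟶ E g)
  map_l : ∀ {X Y X' Y' : M} {f : X ⟶ Y} {g : X' ⟶ Y'} (u : X ⟶ X') (v : Y ⟶ Y')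
    (h : f ≫ v = u ≫ g), l f ≫ map u v h = u ≫ l g
  map_r : ∀ {X Y X' Y' : M} {f : X ⟶ Y} {g : X' ⟶ Y'} (u : X ⟶ X') (v : Y ⟶ Y')
    (h : f ≫ v = u ≫ g), r f ≫ v = map u v h ≫ r g
  map_id : ∀ {X Y : M} (f : X ⟶ Y), map (𝟙 X) (𝟙 Y) (by simp) = 𝟙 (E f)
  map_comp : ∀ {X Y X' Y' X'' Y'' : M} {f : X ⟶ Y} {g : X' ⟶ Y'} {h : X'' ⟶ Y''}
    (u : X ⟶ X') (v : Y ⟶ Y') (u' : X' ⟶ X'') (v' : Y' ⟶ Y'')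
    (h₁ : f ≫ v = u ≫ g) (h₂ : g ≫ v' = u' ≫ h),
    map (u ≫ u') (v ≫ v')
      (by rw [← Category.assoc, h₁, Category.assoc, h₂, ← Category.assoc]) =
      map u v h₁ ≫ map u' v' h₂

/-- An algebraic weak factorization system on `M`: a functorial factorization whose
left functor underlies a comonad (comultiplication `δ`) and whose right functor
underlies a monad (multiplication `μ`), subject to the distributive law. -/
structure AWFS (M : Type u) [Category.{v} M] extends FunctFact M where
  δ : ∀ {X Y : M} (f : X ⟶ Y), E f ⟶ E (l f)
  μ : ∀ {X Y : M} (f : X ⟶ Y), E (r f) ⟶ E f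
  l_δ : ∀ {X Y : M} (f : X ⟶ Y), l f ≫ δ f = l (l f)
  δ_r : ∀ {X Y : M} (f : X ⟶ Y), δ f ≫ r (l f) = 𝟙 (E f)
  l_μ : ∀ {X Y : M} (f : X ⟶ Y), l (r f) ≫ μ f = 𝟙 (E f)
  μ_r : ∀ {X Y : M} (f : X ⟶ Y), μ f ≫ r f = r (r f)
  δ_nat : ∀ {X Y X' Y' : M} {f : X ⟶ Y} {g : X' ⟶ Y'} (u : X ⟶ X') (v : Y ⟶ Y')
    (h : f ≫ v = u ≫ g),
    δ f ≫ map u (map u v h) (map_l u v h) = map u v h ≫ δ g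
  μ_nat : ∀ {X Y X' Y' : M} {f : X ⟶ Y} {g : X' ⟶ Y'} (u : X ⟶ X') (v : Y ⟶ Y')
    (h : f ≫ v = u ≫ g),
    μ f ≫ map u v h = map (map u v h) v (map_r u v h) ≫ μ g
  δ_coassoc : ∀ {X Y : M} (f : X ⟶ Y) (pf : l f ≫ δ f = 𝟙 X ≫ l (l f)),
    δ f ≫ δ (l f) = δ f ≫ map (𝟙 X) (δ f) pf
  μ_assoc : ∀ {X Y : M} (f : X ⟶ Y) (pf : r (r f) ≫ 𝟙 Y = μ f ≫ r f),
    μ (r f) ≫ μ f = map (μ f) (𝟙 Y) pf ≫ μ f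
  distrib : ∀ {X Y : M} (f : X ⟶ Y) (pf : l (r f) ≫ μ f = δ f ≫ r (l f)),
    μ f ≫ δ f = δ (r f) ≫ map (δ f) (μ f) pf ≫ μ (l f)

/-- Coalgebras for the pointed endofunctor `(L, ε)` underlying the comonad of an awfs
form the retract closure of the coalgebras for the comonad `L`: any arrow with an
`(L, ε)`-coalgebra structure `s` is exhibited by `(𝟙, s)` and the counit `(𝟙, r f)` as a
retract of its left factor `l f`, which carries the cofree comonad-coalgebra structure
`δ f`; conversely any retract of an arrow admitting a comonad-coalgebra structure
admits an `(L, ε)`-coalgebra structure. -/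
theorem stmt6 {M : Type u} [Category.{v} M] (F : AWFS M) :
    (∀ {X Y : M} (f : X ⟶ Y) (s : Y ⟶ F.E f),
      f ≫ s = F.l f → s ≫ F.r f = 𝟙 Y →
      -- the retract diagram exhibiting `f` as a retract of `l f`:
      ((f ≫ s = 𝟙 X ≫ F.l f) ∧ (F.l f ≫ F.r f = 𝟙 X ≫ f) ∧
        (𝟙 X ≫ 𝟙 X = 𝟙 X) ∧ (s ≫ F.r f = 𝟙 Y)) ∧
      -- `l f` carries the cofree comonad-coalgebra structure `δ f`:
      ((F.l f ≫ F.δ f = F.l (F.l f)) ∧ (F.δ f ≫ F.r (F.l f) = 𝟙 (F.E f)) ∧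
        ∀ (pf : F.l f ≫ F.δ f = 𝟙 X ≫ F.l (F.l f)),
          F.δ f ≫ F.δ (F.l f) = F.δ f ≫ F.map (𝟙 X) (F.δ f) pf)) ∧
    (∀ {X Y X' Y' : M} (f : X ⟶ Y) (g : X' ⟶ Y') (c : Y' ⟶ F.E g)
      (i₁ : X ⟶ X') (i₂ : Y ⟶ Y') (r₁ : X' ⟶ X) (r₂ : Y' ⟶ Y),
      f ≫ i₂ = i₁ ≫ g → g ≫ r₂ = r₁ ≫ f → i₁ ≫ r₁ = 𝟙 X → i₂ ≫ r₂ = 𝟙 Y →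
      -- `c` is a comonad-coalgebra structure on `g`:
      g ≫ c = F.l g → c ≫ F.r g = 𝟙 Y' →
      (∀ (pf : g ≫ c = 𝟙 X' ≫ F.l g), c ≫ F.δ g = c ≫ F.map (𝟙 X') c pf) →
      -- then the retract `f` admits an `(L, ε)`-coalgebra structure:
      ∃ s : Y ⟶ F.E f, f ≫ s = F.l f ∧ s ≫ F.r f = 𝟙 Y) := by
  constructor
  · intro X Y f s hfs hsr
    exact ⟨⟨by simpa using hfs, by simp [F.fact], by simp, hsr⟩,
      F.l_δ f, F.δ_r f, fun pf => F.δ_coassoc f pf⟩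
  · intro X Y X' Y' f g c i₁ i₂ r₁ r₂ hi hr hir₁ hir₂ hgc hcr _
    refine ⟨i₂ ≫ c ≫ F.map r₁ r₂ hr, ?_, ?_⟩
    · rw [← Category.assoc, hi, Category.assoc, ← Category.assoc g c, hgc,
        F.map_l, ← Category.assoc, hir₁, Category.id_comp]
    · rw [Category.assoc, Category.assoc, ← F.map_r, ← Category.assoc c,
        hcr, Category.id_comp, hir₂]
end

section
/- Let (L,R) be an algebraic weak factorization system on M and let (f,s) and (g,t) be R-algebras with cod f = dom g. Then gf carries the R-algebra structure t•s = s ∘ E(1, t ∘ E(f,1)) ∘ δ_{gf}, and this satisfies the unit condition: (t•s) ∘ L(gf) = id, so (gf, t•s) is an algebra for the pointed endofunctor (R,η). -/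
open CategoryTheory

universe v u

/-- The canonical algebra structure `t • s` on a composite `f ≫ g` of two
`R`-algebras `(f, s)` and `(g, t)`: `t • s = s ∘ E(1, t ∘ E(f,1)) ∘ δ_{gf}`. -/
def AWFS.comp {M : Type u} [Category.{v} M] (F : AWFS M) {X Y Z : M}
    (f : X ⟶ Y) (g : Y ⟶ Z) (s : F.E f ⟶ X) (t : F.E g ⟶ Y)
    (ht : F.l g ≫ t = 𝟙 Y) : F.E (f ≫ g) ⟶ X :=
  F.δ (f ≫ g) ≫
    F.map (𝟙 X) (F.map f (𝟙 Z) (by simp) ≫ t)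
      (by rw [← Category.assoc, F.map_l, Category.assoc, ht, Category.comp_id,
            Category.id_comp]) ≫ s

namespace AWFS

variable {M : Type u} [Category.{v} M] (F : AWFS M) {X Y Z : M}
  {f : X ⟶ Y} {g : Y ⟶ Z} {s : F.E f ⟶ X} {t : F.E g ⟶ Y}

theorem l_comp_comp_eq_id (ht : F.l g ≫ t = 𝟙 Y) (hs : F.l f ≫ s = 𝟙 X) :
    F.l (f ≫ g) ≫ F.comp f g s t ht = 𝟙 X := by
  rw [comp, ← Category.assoc, F.l_δ, ← Category.assoc, F.map_l, Category.assoc, hs,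
    Category.comp_id]

theorem comp_comp_eq_r (ht : F.l g ≫ t = 𝟙 Y) (hs : s ≫ f = F.r f) (ht' : t ≫ g = F.r g) :
    F.comp f g s t ht ≫ (f ≫ g) = F.r (f ≫ g) := by
  simp only [comp, Category.assoc, reassoc_of% hs, ← reassoc_of% F.map_r, reassoc_of% F.δ_r,
    ht', ← F.map_r, Category.comp_id]

end AWFS

/-- The canonical composite `t • s` of the algebra structures of composable
`R`-algebras `(f, s)` and `(g, t)` satisfies the unit condition
`(t • s) ∘ L(gf) = id`, so `(g ≫ f, t • s)` is an algebra for the pointed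
endofunctor `(R, η)`. -/
theorem stmt8 {M : Type u} [Category.{v} M] (F : AWFS M) {X Y Z : M}
    (f : X ⟶ Y) (g : Y ⟶ Z)
    (s : F.E f ⟶ X) (t : F.E g ⟶ Y)
    (hs1 : F.l f ≫ s = 𝟙 X) (hs2 : s ≫ f = F.r f)
    (ht1 : F.l g ≫ t = 𝟙 Y) (ht2 : t ≫ g = F.r g) :
    F.l (f ≫ g) ≫ F.comp f g s t ht1 = 𝟙 X ∧
      F.comp f g s t ht1 ≫ (f ≫ g) = F.r (f ≫ g) :=
  ⟨F.l_comp_comp_eq_id ht1 hs1, F.comp_comp_eq_r ht1 hs2 ht2⟩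
end

section
/- Vertical composition of R-algebra morphisms: if (u,v): (f,s) ⇒ (h,s') and (v,w): (g,t) ⇒ (k,t') are morphisms of R-algebras with cod f = dom g and cod h = dom k, then (u,w): (gf, t•s) ⇒ (kh, t'•s') is a morphism of R-algebras, where • denotes the canonical composition of algebra structures in an awfs. -/
/-! Naturality of `δ` and functoriality of `E` move `E(u, w)` past `δ_{gf}` and past
`E(1, t ∘ E(f, 1))`, the latter because `(v, w)` is an algebra morphism; what comes out is
`E(u, v)`, which moves past `s` because `(u, v)` is one. -/

open CategoryTheory

universe v u

theorem FunctFact.map_congr {M : Type u} [Category.{v} M] (F : FunctFact M)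
    {X Y X' Y' : M} {f : X ⟶ Y} {g : X' ⟶ Y'} {u u' : X ⟶ X'} {v v' : Y ⟶ Y'}
    (hu : u = u') (hv : v = v') (p : f ≫ v = u ≫ g) (p' : f ≫ v' = u' ≫ g) :
    F.map u v p = F.map u' v' p' := by
  subst hu hv
  rfl

theorem FunctFact.map_comp_map {M : Type u} [Category.{v} M] (F : FunctFact M)
    {X Y X' Y' X'' Y'' : M} {f : X ⟶ Y} {g : X' ⟶ Y'} {h : X'' ⟶ Y''}
    {u : X ⟶ X'} {v : Y ⟶ Y'} {u' : X' ⟶ X''} {v' : Y' ⟶ Y''}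
    {a : X ⟶ X''} {b : Y ⟶ Y''} (ha : u ≫ u' = a) (hb : v ≫ v' = b)
    (h₁ : f ≫ v = u ≫ g) (h₂ : g ≫ v' = u' ≫ h) :
    F.map u v h₁ ≫ F.map u' v' h₂ =
      F.map a b (by rw [← ha, ← hb, reassoc_of% h₁, h₂, Category.assoc]) := by
  rw [← F.map_comp]
  exact F.map_congr ha hb _ _

theorem FunctFact.map_id_right_naturality {M : Type u} [Category.{v} M] (F : FunctFact M)
    {X Y Z X' Y' Z' : M} {f : X ⟶ Y} {g : Y ⟶ Z} {h : X' ⟶ Y'} {k : Y' ⟶ Z'}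
    {u : X ⟶ X'} {v : Y ⟶ Y'} {w : Z ⟶ Z'}
    (sq1 : f ≫ v = u ≫ h) (sq2 : g ≫ w = v ≫ k) (sq3 : (f ≫ g) ≫ w = u ≫ h ≫ k) :
    F.map u w sq3 ≫ F.map h (𝟙 Z') (by simp) =
      F.map f (𝟙 Z) (by simp) ≫ F.map v w sq2 := by
  rw [F.map_comp_map rfl (Category.comp_id w), F.map_comp_map sq1 (Category.id_comp w)]

/-- `t • s` has the shape `s ∘ E(1, φ) ∘ δ_a` with `φ = t ∘ E(f, 1)`; the part `E(1, φ) ∘ δ_a`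
is natural as soon as `φ` is. -/
theorem AWFS.δ_map_naturality {M : Type u} [Category.{v} M] (F : AWFS M)
    {X W Y X' W' Y' : M} {a : X ⟶ W} {b : X' ⟶ W'} {c : X ⟶ Y} {c' : X' ⟶ Y'}
    {u : X ⟶ X'} {v : Y ⟶ Y'} {w : W ⟶ W'}
    (sqa : a ≫ w = u ≫ b) (sqc : c ≫ v = u ≫ c')
    (φ : F.E a ⟶ Y) (φ' : F.E b ⟶ Y')
    (hφ : F.l a ≫ φ = 𝟙 X ≫ c) (hφ' : F.l b ≫ φ' = 𝟙 X' ≫ c')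
    (hnat : F.map u w sqa ≫ φ' = φ ≫ v) :
    (F.map u w sqa ≫ F.δ b) ≫ F.map (𝟙 X') φ' hφ' =
      (F.δ a ≫ F.map (𝟙 X) φ hφ) ≫ F.map u v sqc := by
  rw [← F.δ_nat, Category.assoc, Category.assoc,
    F.map_comp_map (Category.comp_id u) hnat, F.map_comp_map (Category.id_comp u) rfl]

theorem stmt9_general {M : Type u} [Category.{v} M] (F : AWFS M)
    {X Y Z X' Y' Z' : M}
    (f : X ⟶ Y) (g : Y ⟶ Z) (h : X' ⟶ Y') (k : Y' ⟶ Z')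
    (s : F.E f ⟶ X) (t : F.E g ⟶ Y) (s' : F.E h ⟶ X') (t' : F.E k ⟶ Y')
    (ht1 : F.l g ≫ t = 𝟙 Y)
    (ht'1 : F.l k ≫ t' = 𝟙 Y')
    (u : X ⟶ X') (v : Y ⟶ Y') (w : Z ⟶ Z')
    (sq1 : f ≫ v = u ≫ h) (sq2 : g ≫ w = v ≫ k)
    (hmor1 : F.map u v sq1 ≫ s' = s ≫ u)
    (hmor2 : F.map v w sq2 ≫ t' = t ≫ v) :
    ∀ (sq3 : (f ≫ g) ≫ w = u ≫ (h ≫ k)),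
      F.map u w sq3 ≫ F.comp h k s' t' ht'1 = F.comp f g s t ht1 ≫ u := by
  intro sq3
  have hnat : F.map u w sq3 ≫ F.map h (𝟙 Z') (by simp) ≫ t' =
      (F.map f (𝟙 Z) (by simp) ≫ t) ≫ v := by
    rw [← Category.assoc, F.map_id_right_naturality sq1 sq2, Category.assoc, hmor2]
    exact (Category.assoc _ _ _).symm
  simp only [AWFS.comp, ← Category.assoc]
  rw [AWFS.δ_map_naturality F sq3 sq1 _ _ (by simp [reassoc_of% F.map_l, ht1])
    (by simp [reassoc_of% F.map_l, ht'1]) hnat]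
  simp only [Category.assoc, hmor1]

/-- Vertical composition of `R`-algebra morphisms: if `(u,v) : (f,s) ⇒ (h,s')` and
`(v,w) : (g,t) ⇒ (k,t')` are morphisms of `R`-algebras, then
`(u,w) : (g ∘ f, t • s) ⇒ (k ∘ h, t' • s')` is a morphism of `R`-algebras. -/
theorem stmt9 {M : Type u} [Category.{v} M] (F : AWFS M)
    {X Y Z X' Y' Z' : M}
    (f : X ⟶ Y) (g : Y ⟶ Z) (h : X' ⟶ Y') (k : Y' ⟶ Z')
    (s : F.E f ⟶ X) (t : F.E g ⟶ Y) (s' : F.E h ⟶ X') (t' : F.E k ⟶ Y')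
    (hs1 : F.l f ≫ s = 𝟙 X) (hs2 : s ≫ f = F.r f)
    (ht1 : F.l g ≫ t = 𝟙 Y) (ht2 : t ≫ g = F.r g)
    (hs'1 : F.l h ≫ s' = 𝟙 X') (hs'2 : s' ≫ h = F.r h)
    (ht'1 : F.l k ≫ t' = 𝟙 Y') (ht'2 : t' ≫ k = F.r k)
    (u : X ⟶ X') (v : Y ⟶ Y') (w : Z ⟶ Z')
    (sq1 : f ≫ v = u ≫ h) (sq2 : g ≫ w = v ≫ k)
    (hmor1 : F.map u v sq1 ≫ s' = s ≫ u)
    (hmor2 : F.map v w sq2 ≫ t' = t ≫ v) :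
    ∀ (sq3 : (f ≫ g) ≫ w = u ≫ (h ≫ k)),
      F.map u w sq3 ≫ F.comp h k s' t' ht'1 = F.comp f g s t ht1 ≫ u :=
  stmt9_general F f g h k s t s' t' ht1 ht'1 u v w sq1 sq2 hmor1 hmor2
end

section
/- Composition of lifting functions: if (L,R) is an awfs on M generated by a category J, and (f,φ),(g,ψ) are objects of J-inj (≅ R-alg) with cod f = dom g, then the formula (ψ•φ)(j,a,b) := φ(j, a, ψ(j, f∘a, b)) defines a coherent lifting function for gf: each (ψ•φ)(j,a,b) is a diagonal filler for the square (a,b): j ⇒ gf, and the coherence condition with respect to morphisms of J holds. -/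
open CategoryTheory

universe v u v' u'

/-- A coherent lifting function for `g` against a category `J` of arrows over the
arrow category: for each object `j` of `𝒥` and each commutative square from
`J.obj j` to `g`, a chosen diagonal filler, natural with respect to the morphisms
of `𝒥`. -/
def IsLiftingFunction {C : Type u} [Category.{v} C] {𝒥 : Type u'} [Category.{v'} 𝒥]
    (J : 𝒥 ⥤ Arrow C) {X Y : C} (g : X ⟶ Y)
    (φ : ∀ (j : 𝒥) (u : (J.obj j).left ⟶ X) (v : (J.obj j).right ⟶ Y),
      (J.obj j).hom ≫ v = u ≫ g → ((J.obj j).right ⟶ X)) : Prop :=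
  (∀ (j : 𝒥) u v h, (J.obj j).hom ≫ φ j u v h = u) ∧
  (∀ (j : 𝒥) u v h, φ j u v h ≫ g = v) ∧
  (∀ {j' j : 𝒥} (a : j' ⟶ j) u v h h',
    φ j' ((J.map a).left ≫ u) ((J.map a).right ≫ v) h' = (J.map a).right ≫ φ j u v h)

namespace IsLiftingFunction

variable {C : Type u} [Category.{v} C] {𝒥 : Type u'} [Category.{v'} 𝒥] {J : 𝒥 ⥤ Arrow C}
  {X Y : C}

/-- Coherence with the restricted square given only up to equality, which avoids rewriting
inside the dependent commutativity proof. -/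
lemma map_eq {g : X ⟶ Y}
    {φ : ∀ (j : 𝒥) (u : (J.obj j).left ⟶ X) (v : (J.obj j).right ⟶ Y),
      (J.obj j).hom ≫ v = u ≫ g → ((J.obj j).right ⟶ X)}
    (hφ : IsLiftingFunction J g φ) {j' j : 𝒥} (a : j' ⟶ j) {u v} (h : (J.obj j).hom ≫ v = u ≫ g)
    {u' v'} (h' : (J.obj j').hom ≫ v' = u' ≫ g)
    (hu : u' = (J.map a).left ≫ u) (hv : v' = (J.map a).right ≫ v) :
    φ j' u' v' h' = (J.map a).right ≫ φ j u v h := by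
  subst hu hv
  exact hφ.2.2 a u v h h'

end IsLiftingFunction

/-- Composition of lifting functions: if `(f, φ)` and `(g, ψ)` carry coherent lifting
functions against `J` with `cod f = dom g`, then
`(ψ • φ)(j, a, b) := φ(j, a, ψ(j, f∘a, b))` is a coherent lifting function for the
composite `f ≫ g`. -/
theorem stmt11 {C : Type u} [Category.{v} C] {𝒥 : Type u'} [Category.{v'} 𝒥]
    (J : 𝒥 ⥤ Arrow C) {X Y Z : C} (f : X ⟶ Y) (g : Y ⟶ Z)
    (φ : ∀ (j : 𝒥) (u : (J.obj j).left ⟶ X) (v : (J.obj j).right ⟶ Y),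
      (J.obj j).hom ≫ v = u ≫ f → ((J.obj j).right ⟶ X))
    (ψ : ∀ (j : 𝒥) (u : (J.obj j).left ⟶ Y) (v : (J.obj j).right ⟶ Z),
      (J.obj j).hom ≫ v = u ≫ g → ((J.obj j).right ⟶ Y))
    (hφ : IsLiftingFunction J f φ) (hψ : IsLiftingFunction J g ψ) :
    IsLiftingFunction J (f ≫ g) (fun j a b hsq =>
      φ j a (ψ j (a ≫ f) b (by rw [hsq, Category.assoc]))
        (hψ.1 j (a ≫ f) b (by rw [hsq, Category.assoc]))) := by
  refine ⟨fun _ _ _ _ => hφ.1 _ _ _ _, fun _ _ _ _ => ?_, fun {j' j} m _ _ _ _ => ?_⟩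
  · rw [← Category.assoc, hφ.2.1, hψ.2.1]
  -- coherence of `ψ` moves the inner filler along `m`, then coherence of `φ` the outer one
  · exact hφ.map_eq m _ _ rfl (hψ.map_eq m _ _ (Category.assoc _ _ _) rfl)
end

section
/- Given an adjunction T ⊣ S between M and K, there is a functor J-inj_K → J-inj_M lifting S: if (f,ψ) is an arrow f of K equipped with a coherent lifting function against the category TJ (the image of J under the lifted adjunction on arrow categories), then (Sf, ψ^♯), where ψ^♯(j,u,v) is the adjunct S(ψ(Tj, ν∘Tu, ν∘Tv))∘ι of ψ's lifts, is an arrow of M with a coherent lifting function against J; moreover squares preserving lifting functions are sent to squares preserving lifting functions. -/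
open CategoryTheory

universe v u v' u'

variable {M : Type u} [Category.{v} M] {K : Type u} [Category.{v} K]
variable {𝒥 : Type u'} [Category.{v'} 𝒥]

/-- The adjunct lifting function `ψ^♯`: given an adjunction `T ⊣ S` and a lifting
function `ψ` for `f` against `TJ`, the lifting function for `S f` against `J` whose
lifts are the adjuncts of the lifts of `ψ`. -/
def sharp {T : M ⥤ K} {S : K ⥤ M} (adj : T ⊣ S) (J : 𝒥 ⥤ Arrow M)
    {X Y : K} (f : X ⟶ Y)
    (ψ : ∀ (j : 𝒥) (u : ((J ⋙ T.mapArrow).obj j).left ⟶ X)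
      (v : ((J ⋙ T.mapArrow).obj j).right ⟶ Y),
      ((J ⋙ T.mapArrow).obj j).hom ≫ v = u ≫ f → (((J ⋙ T.mapArrow).obj j).right ⟶ X)) :
    ∀ (j : 𝒥) (u : (J.obj j).left ⟶ S.obj X) (v : (J.obj j).right ⟶ S.obj Y),
      (J.obj j).hom ≫ v = u ≫ S.map f → ((J.obj j).right ⟶ S.obj X) :=
  fun j u v h =>
    adj.unit.app ((J.obj j).right) ≫
      S.map (ψ j (T.map u ≫ adj.counit.app X) (T.map v ≫ adj.counit.app Y)
        (by
          show T.map (J.obj j).hom ≫ (T.map v ≫ adj.counit.app Y) =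
            (T.map u ≫ adj.counit.app X) ≫ f
          rw [← Category.assoc, ← T.map_comp, h, T.map_comp, Category.assoc,
            Category.assoc]
          congr 1
          simpa using adj.counit.naturality f))

/-!
Since `Adjunction.homEquiv` is `unit ≫ S.map -` with inverse `T.map - ≫ counit`, the lift
`ψ^♯ j u v` is by definition the transpose of `ψ`'s lift for the transposed square. Each
axiom of a lifting function for `ψ^♯`, and compatibility with a square `(S a, S b)`, is the
transpose of the corresponding property of `ψ`, by naturality of `homEquiv` in both variables.
-/

lemma liftingFunction_congr {C : Type u} [Category.{v} C] (J : 𝒥 ⥤ Arrow C) {X Y : C}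
    {g : X ⟶ Y} (φ : ∀ (j : 𝒥) (u : (J.obj j).left ⟶ X) (v : (J.obj j).right ⟶ Y),
      (J.obj j).hom ≫ v = u ≫ g → ((J.obj j).right ⟶ X))
    {j : 𝒥} {u u' : (J.obj j).left ⟶ X} {v v' : (J.obj j).right ⟶ Y}
    (hu : u = u') (hv : v = v') (h : (J.obj j).hom ≫ v = u ≫ g) :
    φ j u v h = φ j u' v' (hu ▸ hv ▸ h) := by
  subst hu hv
  rfl

section

variable {T : M ⥤ K} {S : K ⥤ M} (adj : T ⊣ S) {J : 𝒥 ⥤ Arrow M} {X Y : K} {f : X ⟶ Y}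
  {ψ : ∀ (j : 𝒥) (u : ((J ⋙ T.mapArrow).obj j).left ⟶ X)
    (v : ((J ⋙ T.mapArrow).obj j).right ⟶ Y),
    ((J ⋙ T.mapArrow).obj j).hom ≫ v = u ≫ f → (((J ⋙ T.mapArrow).obj j).right ⟶ X)}

lemma hom_comp_sharp (hψ : IsLiftingFunction (J ⋙ T.mapArrow) f ψ) (j : 𝒥)
    (u : (J.obj j).left ⟶ S.obj X) (v : (J.obj j).right ⟶ S.obj Y)
    (h : (J.obj j).hom ≫ v = u ≫ S.map f) :
    (J.obj j).hom ≫ sharp adj J f ψ j u v h = u :=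
  calc (J.obj j).hom ≫ sharp adj J f ψ j u v h
      = adj.homEquiv _ _ (T.map (J.obj j).hom ≫ ψ j _ _ _) :=
        (adj.homEquiv_naturality_left _ _).symm
    _ = u := (congrArg (adj.homEquiv _ _) (hψ.1 j _ _ _)).trans (Equiv.apply_symm_apply _ _)

lemma sharp_comp_map (hψ : IsLiftingFunction (J ⋙ T.mapArrow) f ψ) (j : 𝒥)
    (u : (J.obj j).left ⟶ S.obj X) (v : (J.obj j).right ⟶ S.obj Y)
    (h : (J.obj j).hom ≫ v = u ≫ S.map f) :
    sharp adj J f ψ j u v h ≫ S.map f = v :=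
  calc sharp adj J f ψ j u v h ≫ S.map f
      = adj.homEquiv _ _ (ψ j _ _ _ ≫ f) := (adj.homEquiv_naturality_right _ _).symm
    _ = v := (congrArg (adj.homEquiv _ _) (hψ.2.1 j _ _ _)).trans (Equiv.apply_symm_apply _ _)

lemma sharp_naturality (hψ : IsLiftingFunction (J ⋙ T.mapArrow) f ψ) {j' j : 𝒥} (a : j' ⟶ j)
    (u : (J.obj j).left ⟶ S.obj X) (v : (J.obj j).right ⟶ S.obj Y)
    (h : (J.obj j).hom ≫ v = u ≫ S.map f) h' :
    sharp adj J f ψ j' ((J.map a).left ≫ u) ((J.map a).right ≫ v) h' =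
      (J.map a).right ≫ sharp adj J f ψ j u v h := by
  have hψa := hψ.2.2 a ((adj.homEquiv _ _).symm u) ((adj.homEquiv _ _).symm v)
    (adj.homEquiv_naturality_right_square _ _ _ _ h)
  exact (congrArg (adj.homEquiv _ _) ((liftingFunction_congr _ ψ
    (adj.homEquiv_naturality_left_symm _ _) (adj.homEquiv_naturality_left_symm _ _) _).trans
    (hψa _))).trans (adj.homEquiv_naturality_left _ _)

lemma isLiftingFunction_sharp (hψ : IsLiftingFunction (J ⋙ T.mapArrow) f ψ) :
    IsLiftingFunction J (S.map f) (sharp adj J f ψ) :=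
  ⟨hom_comp_sharp adj hψ, sharp_comp_map adj hψ, fun a => sharp_naturality adj hψ a⟩

lemma sharp_comp_map_eq_sharp {X' Y' : K} {f' : X' ⟶ Y'}
    {ψ' : ∀ (j : 𝒥) (u : ((J ⋙ T.mapArrow).obj j).left ⟶ X')
      (v : ((J ⋙ T.mapArrow).obj j).right ⟶ Y'),
      ((J ⋙ T.mapArrow).obj j).hom ≫ v = u ≫ f' → (((J ⋙ T.mapArrow).obj j).right ⟶ X')}
    {a : X ⟶ X'} {b : Y ⟶ Y'}
    (hψψ' : ∀ (j : 𝒥) u v h h', ψ j u v h ≫ a = ψ' j (u ≫ a) (v ≫ b) h') (j : 𝒥)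
    (u : (J.obj j).left ⟶ S.obj X) (v : (J.obj j).right ⟶ S.obj Y)
    (h : (J.obj j).hom ≫ v = u ≫ S.map f) h' :
    sharp adj J f ψ j u v h ≫ S.map a =
      sharp adj J f' ψ' j (u ≫ S.map a) (v ≫ S.map b) h' :=
  calc sharp adj J f ψ j u v h ≫ S.map a
      = adj.homEquiv _ _ (ψ j _ _ _ ≫ a) := (adj.homEquiv_naturality_right _ _).symm
    _ = sharp adj J f' ψ' j (u ≫ S.map a) (v ≫ S.map b) h' :=
        congrArg _ ((hψψ' j _ _ _ _).trans (liftingFunction_congr _ ψ'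
          (adj.homEquiv_naturality_right_symm _ _) (adj.homEquiv_naturality_right_symm _ _) _).symm)

end

/-- Given an adjunction `T ⊣ S`, a lifting function for `f` against `TJ` transposes to
the lifting function `ψ^♯` for `S f` against `J`; moreover squares preserving lifting
functions are sent to squares preserving lifting functions. -/
theorem stmt12 {T : M ⥤ K} {S : K ⥤ M} (adj : T ⊣ S) (J : 𝒥 ⥤ Arrow M)
    {X Y : K} (f : X ⟶ Y)
    (ψ : ∀ (j : 𝒥) (u : ((J ⋙ T.mapArrow).obj j).left ⟶ X)
      (v : ((J ⋙ T.mapArrow).obj j).right ⟶ Y),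
      ((J ⋙ T.mapArrow).obj j).hom ≫ v = u ≫ f → (((J ⋙ T.mapArrow).obj j).right ⟶ X))
    (hψ : IsLiftingFunction (J ⋙ T.mapArrow) f ψ) :
    IsLiftingFunction J (S.map f) (sharp adj J f ψ) ∧
    (∀ {X' Y' : K} (f' : X' ⟶ Y')
      (ψ' : ∀ (j : 𝒥) (u : ((J ⋙ T.mapArrow).obj j).left ⟶ X')
        (v : ((J ⋙ T.mapArrow).obj j).right ⟶ Y'),
        ((J ⋙ T.mapArrow).obj j).hom ≫ v = u ≫ f' →
          (((J ⋙ T.mapArrow).obj j).right ⟶ X')),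
      IsLiftingFunction (J ⋙ T.mapArrow) f' ψ' →
      ∀ (a : X ⟶ X') (b : Y ⟶ Y'), f ≫ b = a ≫ f' →
      (∀ (j : 𝒥) u v h h', ψ j u v h ≫ a = ψ' j (u ≫ a) (v ≫ b) h') →
      ∀ (j : 𝒥) u v h h',
        sharp adj J f ψ j u v h ≫ S.map a =
          sharp adj J f' ψ' j (u ≫ S.map a) (v ≫ S.map b) h') :=
  ⟨isLiftingFunction_sharp adj hψ, fun _ _ _ _ _ _ hψψ' => sharp_comp_map_eq_sharp adj hψψ'⟩
end

section
/- In an orthogonal factorization system (L,R), every arrow in R has a unique algebra structure for the induced pointed endofunctor, and the structure map is an isomorphism; dually every arrow in L has a unique coalgebra structure with isomorphism structure map. Consequently the classes of such algebras and coalgebras are closed under retracts, and the orthogonal factorization system canonically underlies an algebraic weak factorization system. -/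
open CategoryTheory

universe v u

/-- A class of morphisms is closed under retracts (taken in the arrow category). -/
def RetractClosed {M : Type u} [Category.{v} M] (P : MorphismProperty M) : Prop :=
  ∀ {X Y X' Y' : M} (f : X ⟶ Y) (g : X' ⟶ Y') (i₁ : X' ⟶ X) (i₂ : Y' ⟶ Y)
    (r₁ : X ⟶ X') (r₂ : Y ⟶ Y'),
    g ≫ i₂ = i₁ ≫ f → f ≫ r₂ = r₁ ≫ g → i₁ ≫ r₁ = 𝟙 X' → i₂ ≫ r₂ = 𝟙 Y' →
    P f → P g

/-- In an orthogonal factorization system `(L, R)` (with functorial factorization `F`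
and unique solutions to lifting problems), every arrow of `R` has a unique algebra
structure for the induced pointed endofunctor, with invertible structure map;
dually for arrows of `L` and coalgebra structures. Consequently the classes of
arrows admitting such (co)algebra structures are closed under retracts, and the
factorization canonically underlies an algebraic weak factorization system: there
exist a comultiplication `δ` and multiplication `μ` satisfying the comonad, monad
and distributivity laws. -/
theorem stmt19 {M : Type u} [Category.{v} M] (L R : MorphismProperty M)
    (F : FunctFact M)
    (hl : ∀ {X Y : M} (f : X ⟶ Y), L (F.l f))
    (hr : ∀ {X Y : M} (f : X ⟶ Y), R (F.r f))
    (huniq : ∀ {A B X Y : M} (i : A ⟶ B) (p : X ⟶ Y), L i → R p →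
      ∀ (u : A ⟶ X) (v : B ⟶ Y), i ≫ v = u ≫ p →
        ∃! w : B ⟶ X, i ≫ w = u ∧ w ≫ p = v) :
    -- unique algebra structures with invertible structure maps:
    (∀ {X Y : M} (g : X ⟶ Y), R g →
      (∃! t : F.E g ⟶ X, t ≫ g = F.r g ∧ F.l g ≫ t = 𝟙 X) ∧
      ∀ t : F.E g ⟶ X, (t ≫ g = F.r g ∧ F.l g ≫ t = 𝟙 X) → IsIso t) ∧
    -- unique coalgebra structures with invertible structure maps:
    (∀ {X Y : M} (f : X ⟶ Y), L f →
      (∃! s : Y ⟶ F.E f, f ≫ s = F.l f ∧ s ≫ F.r f = 𝟙 Y) ∧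
      ∀ s : Y ⟶ F.E f, (f ≫ s = F.l f ∧ s ≫ F.r f = 𝟙 Y) → IsIso s) ∧
    -- retract closure of the classes of algebras and coalgebras:
    RetractClosed (fun X _ g => ∃ t, t ≫ g = F.r g ∧ F.l g ≫ t = 𝟙 X) ∧
    RetractClosed (fun _ Y f => ∃ s, f ≫ s = F.l f ∧ s ≫ F.r f = 𝟙 Y) ∧
    -- the factorization underlies an awfs:
    (∃ (δ : ∀ {X Y : M} (f : X ⟶ Y), F.E f ⟶ F.E (F.l f))
       (μ : ∀ {X Y : M} (f : X ⟶ Y), F.E (F.r f) ⟶ F.E f),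
      (∀ {X Y : M} (f : X ⟶ Y), F.l f ≫ δ f = F.l (F.l f)) ∧
      (∀ {X Y : M} (f : X ⟶ Y), δ f ≫ F.r (F.l f) = 𝟙 (F.E f)) ∧
      (∀ {X Y : M} (f : X ⟶ Y), F.l (F.r f) ≫ μ f = 𝟙 (F.E f)) ∧
      (∀ {X Y : M} (f : X ⟶ Y), μ f ≫ F.r f = F.r (F.r f)) ∧
      (∀ {X Y : M} (f : X ⟶ Y) (pf : F.l f ≫ δ f = 𝟙 X ≫ F.l (F.l f)),
        δ f ≫ δ (F.l f) = δ f ≫ F.map (𝟙 X) (δ f) pf) ∧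
      (∀ {X Y : M} (f : X ⟶ Y) (pf : F.r (F.r f) ≫ 𝟙 Y = μ f ≫ F.r f),
        μ (F.r f) ≫ μ f = F.map (μ f) (𝟙 Y) pf ≫ μ f) ∧
      (∀ {X Y : M} (f : X ⟶ Y) (pf : F.l (F.r f) ≫ μ f = δ f ≫ F.r (F.l f)),
        μ f ≫ δ f = δ (F.r f) ≫ F.map (δ f) (μ f) pf ≫ μ (F.l f))) := by

  classical
  -- δ f : solution of lifting l f against r (l f)
  have hδ : ∀ {X Y : M} (f : X ⟶ Y),
      ∃! w : F.E f ⟶ F.E (F.l f), F.l f ≫ w = F.l (F.l f) ∧ w ≫ F.r (F.l f) = 𝟙 (F.E f) :=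
    fun f => huniq (F.l f) (F.r (F.l f)) (hl f) (hr (F.l f)) (F.l (F.l f)) (𝟙 _)
      (by simp [F.fact])
  have hμ : ∀ {X Y : M} (f : X ⟶ Y),
      ∃! w : F.E (F.r f) ⟶ F.E f, F.l (F.r f) ≫ w = 𝟙 (F.E f) ∧ w ≫ F.r f = F.r (F.r f) :=
    fun f => huniq (F.l (F.r f)) (F.r f) (hl (F.r f)) (hr f) (𝟙 _) (F.r (F.r f))
      (by simp [F.fact])
  refine ⟨?_, ?_, ?_, ?_, ?_⟩
  · -- algebras
    intro X Y g hg
    have h := huniq (F.l g) g (hl g) hg (𝟙 X) (F.r g) (by simp [F.fact])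
    constructor
    · obtain ⟨t, ⟨ht1, ht2⟩, htu⟩ := h
      exact ⟨t, ⟨ht2, ht1⟩, fun t' ht' => htu t' ⟨ht'.2, ht'.1⟩⟩
    · rintro t ⟨ht1, ht2⟩
      have h2 := huniq (F.l g) (F.r g) (hl g) (hr g) (F.l g) (F.r g) (by simp)
      exact ⟨F.l g, h2.unique ⟨by rw [← Category.assoc, ht2, Category.id_comp],
          by rw [Category.assoc, F.fact, ht1]⟩ ⟨Category.comp_id _, Category.id_comp _⟩, ht2⟩
  · -- coalgebras
    intro X Y f hf
    have h := huniq f (F.r f) hf (hr f) (F.l f) (𝟙 Y) (by simp [F.fact])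
    constructor
    · obtain ⟨s, hs, hsu⟩ := h
      exact ⟨s, hs, hsu⟩
    · rintro s ⟨hs1, hs2⟩
      have h2 := huniq (F.l f) (F.r f) (hl f) (hr f) (F.l f) (F.r f) (by simp)
      exact ⟨F.r f, hs2,
        h2.unique ⟨by rw [← Category.assoc, F.fact f, hs1],
            by rw [Category.assoc, hs2, Category.comp_id]⟩
          ⟨Category.comp_id _, Category.id_comp _⟩⟩
  · -- retract closure, algebras
    rintro X Y X' Y' f g i₁ i₂ r₁ r₂ sq1 sq2 hi₁ hi₂ ⟨t, ht1, ht2⟩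
    refine ⟨F.map i₁ i₂ sq1 ≫ t ≫ r₁, ?_, ?_⟩
    · have := F.map_r i₁ i₂ sq1
      calc (F.map i₁ i₂ sq1 ≫ t ≫ r₁) ≫ g
          = F.map i₁ i₂ sq1 ≫ t ≫ (r₁ ≫ g) := by simp
        _ = F.map i₁ i₂ sq1 ≫ t ≫ f ≫ r₂ := by rw [sq2]
        _ = F.map i₁ i₂ sq1 ≫ F.r f ≫ r₂ := by rw [← Category.assoc t, ht1]
        _ = (F.r g ≫ i₂) ≫ r₂ := by rw [← Category.assoc, ← this]
        _ = F.r g := by rw [Category.assoc, hi₂, Category.comp_id]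
    · calc F.l g ≫ F.map i₁ i₂ sq1 ≫ t ≫ r₁
          = (F.l g ≫ F.map i₁ i₂ sq1) ≫ t ≫ r₁ := by simp
        _ = (i₁ ≫ F.l f) ≫ t ≫ r₁ := by rw [F.map_l]
        _ = i₁ ≫ (F.l f ≫ t) ≫ r₁ := by simp
        _ = 𝟙 X' := by rw [ht2, Category.id_comp, hi₁]
  · -- retract closure, coalgebras
    rintro X Y X' Y' f g i₁ i₂ r₁ r₂ sq1 sq2 hi₁ hi₂ ⟨s, hs1, hs2⟩
    refine ⟨i₂ ≫ s ≫ F.map r₁ r₂ sq2, ?_, ?_⟩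
    · calc g ≫ i₂ ≫ s ≫ F.map r₁ r₂ sq2
          = (g ≫ i₂) ≫ s ≫ F.map r₁ r₂ sq2 := by simp
        _ = i₁ ≫ (f ≫ s) ≫ F.map r₁ r₂ sq2 := by rw [sq1]; simp
        _ = i₁ ≫ F.l f ≫ F.map r₁ r₂ sq2 := by rw [hs1]
        _ = i₁ ≫ r₁ ≫ F.l g := by rw [F.map_l]
        _ = F.l g := by rw [← Category.assoc, hi₁, Category.id_comp]
    · calc (i₂ ≫ s ≫ F.map r₁ r₂ sq2) ≫ F.r g
          = i₂ ≫ s ≫ (F.map r₁ r₂ sq2 ≫ F.r g) := by simp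
        _ = i₂ ≫ s ≫ F.r f ≫ r₂ := by rw [← F.map_r]
        _ = i₂ ≫ (s ≫ F.r f) ≫ r₂ := by simp
        _ = 𝟙 Y' := by rw [hs2, Category.id_comp, hi₂]
  · -- the awfs
    refine ⟨fun {X Y} f => (hδ f).choose, fun {X Y} f => (hμ f).choose,
      fun f => (hδ f).choose_spec.1.1, fun f => (hδ f).choose_spec.1.2,
      fun f => (hμ f).choose_spec.1.1, fun f => (hμ f).choose_spec.1.2, ?_, ?_, ?_⟩
    all_goals
      intro X Y f pf
      beta_reduce at pf ⊢
    · have d1 : ∀ {X Y : M} (f : X ⟶ Y), F.l f ≫ (hδ f).choose = F.l (F.l f) :=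
        fun f => (hδ f).choose_spec.1.1
      have d2 : ∀ {X Y : M} (f : X ⟶ Y), (hδ f).choose ≫ F.r (F.l f) = 𝟙 (F.E f) :=
        fun f => (hδ f).choose_spec.1.2
      have h := huniq (F.l f) (F.r (F.l (F.l f))) (hl f) (hr (F.l (F.l f)))
        (F.l (F.l (F.l f))) ((hδ f).choose) ?_
      · refine h.unique ⟨?_, ?_⟩ ⟨?_, ?_⟩
        · rw [← Category.assoc, d1, d1]
        · rw [Category.assoc, d2, Category.comp_id]
        · rw [← Category.assoc, d1, F.map_l, Category.id_comp]
        · rw [Category.assoc, ← F.map_r, ← Category.assoc, d2, Category.id_comp]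
      · rw [F.fact]; exact d1 f
    · have m1 : ∀ {X Y : M} (f : X ⟶ Y), F.l (F.r f) ≫ (hμ f).choose = 𝟙 (F.E f) :=
        fun f => (hμ f).choose_spec.1.1
      have m2 : ∀ {X Y : M} (f : X ⟶ Y), (hμ f).choose ≫ F.r f = F.r (F.r f) :=
        fun f => (hμ f).choose_spec.1.2
      have h := huniq (F.l (F.r (F.r f))) (F.r f) (hl (F.r (F.r f))) (hr f)
        ((hμ f).choose) (F.r (F.r (F.r f))) ?_
      · refine h.unique ⟨?_, ?_⟩ ⟨?_, ?_⟩
        · rw [← Category.assoc, m1, Category.id_comp]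
        · rw [Category.assoc, m2, m2]
        · rw [← Category.assoc, F.map_l, Category.assoc, m1, Category.comp_id]
        · rw [Category.assoc, m2, ← F.map_r, Category.comp_id]
      · rw [F.fact]; exact (m2 f).symm
    · have d1 : ∀ {X Y : M} (f : X ⟶ Y), F.l f ≫ (hδ f).choose = F.l (F.l f) :=
        fun f => (hδ f).choose_spec.1.1
      have d2 : ∀ {X Y : M} (f : X ⟶ Y), (hδ f).choose ≫ F.r (F.l f) = 𝟙 (F.E f) :=
        fun f => (hδ f).choose_spec.1.2
      have m1 : ∀ {X Y : M} (f : X ⟶ Y), F.l (F.r f) ≫ (hμ f).choose = 𝟙 (F.E f) :=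
        fun f => (hμ f).choose_spec.1.1
      have m2 : ∀ {X Y : M} (f : X ⟶ Y), (hμ f).choose ≫ F.r f = F.r (F.r f) :=
        fun f => (hμ f).choose_spec.1.2
      have h := huniq (F.l (F.r f)) (F.r (F.l f)) (hl (F.r f)) (hr (F.l f))
        ((hδ f).choose) ((hμ f).choose) pf
      refine h.unique ⟨?_, ?_⟩ ⟨?_, ?_⟩
      · rw [← Category.assoc, m1, Category.id_comp]
      · rw [Category.assoc, d2, Category.comp_id]
      · rw [← Category.assoc, d1, ← Category.assoc, F.map_l, Category.assoc, m1,
          Category.comp_id]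
      · rw [Category.assoc, Category.assoc, m2, ← F.map_r, ← Category.assoc, d2,
          Category.id_comp]
end
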